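/- arXiv:1904.08699 — 3 statements merged into one kernel-verified Lean document; each statement's English description precedes it below -/
import Mathlib

section
/- Let p : Fin n → Fin m → ℝ with 0 ≤ p i j ≤ 1, and suppose p is reproduced by an ontological model with finite ontic state space Λ of cardinality N: probability distributions μ_i on Λ and response functions ξ_j : Λ → ℝ with 0 ≤ ξ_j(λ) ≤ 1 satisfying ∑_λ μ_i(λ)·ξ_j(λ) = p i j for all i, j. Fix an enumeration λ_0, …, λ_{N−1} of Λ and define N − 1 additional binary-measurement statistics q i t = μ_i(λ_t) for t < N − 1. Then: (1) each p i j is an affine function of (q i t)_{t < N−1}, namely p i j = ∑_{t < N−1} ξ_j(λ_t)·q i t + ξ_j(λ_{N−1})·(1 − ∑_{t < N−1} q i t); and (2) the combined statistics on Fin n → Fin (m + (N−1)) → ℝ, given by p in the first m coordinates and q in the last N − 1, admit a preparation-noncontextual ontological model. -/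
/-- The data `(μ, ξ)` on a finite ontic space `Λ` is a preparation-noncontextual
ontological model of the statistics `p`. -/
def IsPNCModelOn {n m : ℕ} (p : Fin n → Fin m → ℝ) (Λ : Type) [Fintype Λ]
    (μ : Fin n → Λ → ℝ) (ξ : Fin m → Λ → ℝ) : Prop :=
  (∀ i l, 0 ≤ μ i l) ∧
  (∀ i, ∑ l, μ i l = 1) ∧
  (∀ j l, 0 ≤ ξ j l ∧ ξ j l ≤ 1) ∧
  (∀ i j, ∑ l, μ i l * ξ j l = p i j) ∧
  (∀ w w' : Fin n → ℝ, (∀ i, 0 ≤ w i) → (∀ i, 0 ≤ w' i) →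
    ∑ i, w i = 1 → ∑ i, w' i = 1 →
    (∀ j, ∑ i, w i * p i j = ∑ i, w' i * p i j) →
    ∀ l, ∑ i, w i * μ i l = ∑ i, w' i * μ i l)

/-- The statistics `p` admit a preparation-noncontextual ontological model on some
finite ontic state space. -/
def IsPNCModel {n m : ℕ} (p : Fin n → Fin m → ℝ) : Prop :=
  ∃ (Λ : Type) (inst : Fintype Λ) (μ : Fin n → Λ → ℝ) (ξ : Fin m → Λ → ℝ),
    @IsPNCModelOn n m p Λ inst μ ξ

/-! The measurement "is the ontic state `λ_t`?" has statistics `μ_i(λ_t)`. Once these indicator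
measurements are added for all but one state, equal statistics of two mixtures force equal mixed
weights on every `λ_t` with `t < N - 1`, and on the remaining state by normalisation. The same
normalisation, `μ_i(λ_{N-1}) = 1 - ∑_t μ_i(λ_t)`, inserted into `p i j = ∑_λ μ_i(λ) ξ_j(λ)`,
gives the affine formula. -/

open Finset

theorem sum_fin_eq_sum_castLE_add_last {α : Type*} [AddCommMonoid α] {N : ℕ} (hN : 0 < N)
    (f : Fin N → α) :
    ∑ k, f k = ∑ t : Fin (N - 1), f (Fin.castLE (Nat.sub_le N 1) t) + f ⟨N - 1, by omega⟩ := by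
  obtain ⟨M, rfl⟩ : ∃ M, N = M + 1 := ⟨N - 1, by omega⟩
  exact Fin.sum_univ_castSucc f

theorem Fin.exists_castLE_eq_of_ne {N : ℕ} (hN : 0 < N) {k : Fin N}
    (hk : k ≠ ⟨N - 1, by omega⟩) : ∃ t : Fin (N - 1), Fin.castLE (Nat.sub_le N 1) t = k :=
  ⟨⟨k, by have := k.isLt; have : (k : ℕ) ≠ N - 1 := fun h => hk (Fin.ext h); omega⟩, rfl⟩

section Mixtures

variable {ι κ Λ : Type*} [Fintype ι] [Fintype Λ] {μ : ι → Λ → ℝ} {w w' : ι → ℝ}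

theorem mixture_eq_of_forall_ne [DecidableEq Λ] (hμ1 : ∀ i, ∑ l, μ i l = 1)
    (hw : ∑ i, w i = 1) (hw' : ∑ i, w' i = 1) (l₀ : Λ)
    (hne : ∀ l ≠ l₀, ∑ i, w i * μ i l = ∑ i, w' i * μ i l) (l : Λ) :
    ∑ i, w i * μ i l = ∑ i, w' i * μ i l := by
  have hmass {v : ι → ℝ} (hv : ∑ i, v i = 1) :
      ∑ i, v i * μ i l₀ = 1 - ∑ l ∈ univ.erase l₀, ∑ i, v i * μ i l := by
    have htotal : ∑ l, ∑ i, v i * μ i l = 1 := by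
      simp only [sum_comm (γ := Λ), ← mul_sum, hμ1, mul_one, hv]
    rw [← add_sum_erase _ _ (mem_univ l₀)] at htotal
    linarith
  by_cases hl : l = l₀
  · rw [hl, hmass hw, hmass hw', sum_congr rfl fun l hl => hne l (ne_of_mem_erase hl)]
  · exact hne l hl

theorem mixture_eq_of_stats_eq [DecidableEq Λ] {p : ι → κ → ℝ} (hμ1 : ∀ i, ∑ l, μ i l = 1)
    (hw : ∑ i, w i = 1) (hw' : ∑ i, w' i = 1) (l₀ : Λ)
    (hcol : ∀ l ≠ l₀, ∃ j, ∀ i, p i j = μ i l)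
    (hstat : ∀ j, ∑ i, w i * p i j = ∑ i, w' i * p i j) (l : Λ) :
    ∑ i, w i * μ i l = ∑ i, w' i * μ i l := by
  refine mixture_eq_of_forall_ne hμ1 hw hw' l₀ (fun l hl => ?_) l
  obtain ⟨j, hj⟩ := hcol l hl
  simpa only [hj] using hstat j

end Mixtures

section AppendIndicators

variable {Λ : Type*} [DecidableEq Λ] {m k : ℕ}

def appendIndicators (ξ : Fin m → Λ → ℝ) (s : Fin k → Λ) (j : Fin (m + k)) (l : Λ) : ℝ :=
  if h : (j : ℕ) < m then ξ ⟨j, h⟩ l else if l = s ⟨j - m, by omega⟩ then 1 else 0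

theorem appendIndicators_mem_Icc {ξ : Fin m → Λ → ℝ} (hξ : ∀ j l, 0 ≤ ξ j l ∧ ξ j l ≤ 1)
    (s : Fin k → Λ) (j : Fin (m + k)) (l : Λ) :
    0 ≤ appendIndicators ξ s j l ∧ appendIndicators ξ s j l ≤ 1 := by
  unfold appendIndicators
  split_ifs
  exacts [hξ _ l, by norm_num, by norm_num]

theorem sum_mul_appendIndicators [Fintype Λ] (μ : Λ → ℝ) (ξ : Fin m → Λ → ℝ) (s : Fin k → Λ)
    (j : Fin (m + k)) :
    ∑ l, μ l * appendIndicators ξ s j l =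
      if h : (j : ℕ) < m then ∑ l, μ l * ξ ⟨j, h⟩ l else μ (s ⟨j - m, by omega⟩) := by
  unfold appendIndicators
  split_ifs <;> simp

end AppendIndicators

/-- If statistics `p` are reproduced by an ontological model with `N` ontic states, then
adding the `N - 1` measurements "is the ontic state `λ_t`?" makes the original statistics
affine functions of the new ones, and the combined statistics admit a
preparation-noncontextual model. -/
theorem ontic_state_measurements_noncontextual
    (n m : ℕ) (p : Fin n → Fin m → ℝ)
    (Λ : Type) [Fintype Λ] [Nonempty Λ]
    (μ : Fin n → Λ → ℝ) (ξ : Fin m → Λ → ℝ)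
    (hμ0 : ∀ i l, 0 ≤ μ i l) (hμ1 : ∀ i, ∑ l, μ i l = 1)
    (hξ : ∀ j l, 0 ≤ ξ j l ∧ ξ j l ≤ 1)
    (hrep : ∀ i j, ∑ l, μ i l * ξ j l = p i j)
    (N : ℕ) (hN : N = Fintype.card Λ)
    (e : Fin N ≃ Λ)
    (q : Fin n → Fin (N - 1) → ℝ)
    (hq : ∀ i t, q i t = μ i (e (Fin.castLE (Nat.sub_le _ _) t))) :
    (∀ i j, p i j =
        (∑ t : Fin (N - 1), ξ j (e (Fin.castLE (Nat.sub_le _ _) t)) * q i t) +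
        ξ j (e ⟨N - 1, by have := Fintype.card_pos (α := Λ); omega⟩) *
          (1 - ∑ t, q i t)) ∧
    IsPNCModel (fun (i : Fin n) (j : Fin (m + (N - 1))) =>
      if h : (j : ℕ) < m then p i ⟨j, h⟩
      else q i ⟨(j : ℕ) - m, by have := j.isLt; omega⟩) := by
  classical
  have hN0 : 0 < N := hN ▸ Fintype.card_pos
  set s : Fin (N - 1) → Λ := fun t => e (Fin.castLE (Nat.sub_le _ _) t)
  set last : Λ := e ⟨N - 1, by omega⟩
  have hsplit (g : Λ → ℝ) : ∑ l, g l = ∑ t, g (s t) + g last := by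
    rw [← e.sum_comp]
    exact sum_fin_eq_sum_castLE_add_last hN0 _
  have hlast (i) : μ i last = 1 - ∑ t, q i t := by
    have := hμ1 i
    rw [hsplit] at this
    simp only [hq]
    linarith
  refine ⟨fun i j => ?_, Λ, inferInstance, μ, appendIndicators ξ s, hμ0, hμ1,
    appendIndicators_mem_Icc hξ s, fun i j => ?_,
    fun w w' _ _ hw hw' hstat => mixture_eq_of_stats_eq hμ1 hw hw' last ?_ hstat⟩
  · rw [← hrep, hsplit, ← hlast]
    simp only [hq, s, mul_comm]
  · rw [sum_mul_appendIndicators]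
    dsimp only
    split_ifs
    exacts [hrep i _, (hq i _).symm]
  · intro l hl
    obtain ⟨t, rfl⟩ : ∃ t, s t = l := by
      obtain ⟨k, rfl⟩ := e.surjective l
      obtain ⟨t, rfl⟩ := Fin.exists_castLE_eq_of_ne hN0 (k := k) (fun h => hl (by rw [h]))
      exact ⟨t, rfl⟩
    exact ⟨⟨m + t, by omega⟩, fun i => by simp [hq, s]⟩
end

section
/- Let θ_n = 2π(n/5 + 1/20) for n ∈ {0,1,2,3,4}, and set x_n = −cos θ_n, y_n = sin θ_n. Then the determinant of the 4×4 matrix with rows (x_2, y_2, x_2 + y_2 − 1, 1), (x_3, y_3, −x_3 + y_3 + 1, 1), (x_0, y_0, x_0 − y_0 + 1, 1), (x_4, y_4, −x_4 − y_4 − 1, 1) equals 5 − √((5/2)(5 − √5)), which is strictly positive. -/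
/-! The points `0, 2` and `3, 4` are mirror images under `x ↦ -x`, so the determinant
factors as `4 (y₂ - y₃) (2 x₂ x₃ + (x₃ y₂ - x₂ y₃) - x₂ - x₃)`, where
`(x₂, y₂) = (sin (2π/5), cos (2π/5))` and `(x₃, y₃) = (sin (π/5), -cos (π/5))`.
From `cos (π/5) = (1 + √5) / 4` one gets `y₂ - y₃ = √5 / 2`, `x₂ x₃ = √5 / 4` and
`x₃ y₂ - x₂ y₃ = sin (3π/5) = x₂`, so the determinant is `5 - 2√5 sin (π/5)`, and
`2√5 sin (π/5) = √((5/2)(5 - √5))`. -/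

open Real

-- Subtracting the mirrored rows leaves two rows supported on the first and third columns.
lemma det_of_mirror_symmetric {R : Type*} [CommRing R] (x y : ℕ → R)
    (hx0 : x 0 = -x 2) (hy0 : y 0 = y 2) (hx4 : x 4 = -x 3) (hy4 : y 4 = y 3) :
    Matrix.det !![x 2, y 2, x 2 + y 2 - 1, 1;
                  x 3, y 3, -x 3 + y 3 + 1, 1;
                  x 0, y 0, x 0 - y 0 + 1, 1;
                  x 4, y 4, -x 4 - y 4 - 1, 1]
      = 4 * (y 2 - y 3) * (2 * x 2 * x 3 + (x 3 * y 2 - x 2 * y 3) - x 2 - x 3) := by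
  rw [hx0, hy0, hx4, hy4]
  simp [Matrix.det_succ_row_zero, Fin.sum_univ_succ, Fin.succAbove]
  ring

lemma cos_two_pi_div_five : cos (2 * π / 5) = (√5 - 1) / 4 := by
  rw [show 2 * π / 5 = 2 * (π / 5) by ring, cos_two_mul, cos_pi_div_five]
  linear_combination (1 / 8 : ℝ) * sq_sqrt (by norm_num : (0 : ℝ) ≤ 5)

lemma sin_pi_div_five_sq : sin (π / 5) ^ 2 = (5 - √5) / 8 := by
  rw [sin_sq, cos_pi_div_five]
  linear_combination (-1 / 16 : ℝ) * sq_sqrt (by norm_num : (0 : ℝ) ≤ 5)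

lemma sin_two_pi_div_five_mul_sin_pi_div_five : sin (2 * π / 5) * sin (π / 5) = √5 / 4 := by
  rw [show 2 * π / 5 = 2 * (π / 5) by ring, sin_two_mul, cos_pi_div_five]
  linear_combination (1 + √5) / 2 * sin_pi_div_five_sq
    + (-1 / 16 : ℝ) * sq_sqrt (by norm_num : (0 : ℝ) ≤ 5)

lemma sin_pi_div_five_mul_cos_two_pi_div_five_add_sin_mul_cos :
    sin (π / 5) * cos (2 * π / 5) + sin (2 * π / 5) * cos (π / 5) = sin (2 * π / 5) := by
  rw [mul_comm (sin (2 * π / 5)), ← sin_add, show π / 5 + 2 * π / 5 = π - 2 * π / 5 by ring,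
    sin_pi_sub]

lemma sqrt_five_div_two_mul_five_sub_sqrt_five_eq :
    √(5 / 2 * (5 - √5)) = 2 * √5 * sin (π / 5) := by
  have hsin : 0 ≤ sin (π / 5) :=
    sin_nonneg_of_nonneg_of_le_pi (by positivity) (by linarith [pi_pos])
  rw [← sqrt_sq (by positivity : 0 ≤ 2 * √5 * sin (π / 5)), mul_pow, mul_pow,
    sq_sqrt (by norm_num), sin_pi_div_five_sq]
  congr 1
  ring

lemma sqrt_five_div_two_mul_five_sub_sqrt_five_lt_five : √(5 / 2 * (5 - √5)) < 5 := by
  rw [sqrt_lt' (by norm_num)]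
  nlinarith [sqrt_nonneg 5]

/-- The value `V_α` for the case `(a, γ, α, b) = (2, 3, 0, 4)` of the pentagon
construction (with the X and Z measurements swapped and the Z outcome flipped, i.e.
coordinates `(−cos θ, sin θ)`) equals `5 − √((5/2)(5 − √5)) > 0`. -/
theorem pentagon_Valpha_second_case
    (θ x y : ℕ → ℝ)
    (hθ : ∀ n, θ n = 2 * Real.pi * ((n : ℝ) / 5 + 1 / 20))
    (hx : ∀ n, x n = -Real.cos (θ n))
    (hy : ∀ n, y n = Real.sin (θ n)) :
    Matrix.det !![x 2, y 2, x 2 + y 2 - 1, 1;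
                  x 3, y 3, -x 3 + y 3 + 1, 1;
                  x 0, y 0, x 0 - y 0 + 1, 1;
                  x 4, y 4, -x 4 - y 4 - 1, 1]
      = 5 - Real.sqrt (5 / 2 * (5 - Real.sqrt 5)) ∧
    0 < 5 - Real.sqrt (5 / 2 * (5 - Real.sqrt 5)) := by
  refine ⟨?_, sub_pos.2 sqrt_five_div_two_mul_five_sub_sqrt_five_lt_five⟩
  have hθ2 : θ 2 = 2 * π / 5 + π / 2 := by rw [hθ]; push_cast; ring
  have hθ3 : θ 3 = π / 2 - π / 5 + π := by rw [hθ]; push_cast; ring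
  have hθ0 : θ 0 = π - θ 2 := by rw [hθ, hθ]; push_cast; ring
  have hθ4 : θ 4 = π - θ 3 + 2 * π := by rw [hθ, hθ]; push_cast; ring
  have hx0 : x 0 = -x 2 := by rw [hx, hx, hθ0, cos_pi_sub]
  have hy0 : y 0 = y 2 := by rw [hy, hy, hθ0, sin_pi_sub]
  have hx4 : x 4 = -x 3 := by rw [hx, hx, hθ4, cos_add_two_pi, cos_pi_sub]
  have hy4 : y 4 = y 3 := by rw [hy, hy, hθ4, sin_add_two_pi, sin_pi_sub]
  have hx2 : x 2 = sin (2 * π / 5) := by rw [hx, hθ2, cos_add_pi_div_two, neg_neg]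
  have hy2 : y 2 = cos (2 * π / 5) := by rw [hy, hθ2, sin_add_pi_div_two]
  have hx3 : x 3 = sin (π / 5) := by rw [hx, hθ3, cos_add_pi, cos_pi_div_two_sub, neg_neg]
  have hy3 : y 3 = -cos (π / 5) := by rw [hy, hθ3, sin_add_pi, sin_pi_div_two_sub]
  have hdiff : y 2 - y 3 = √5 / 2 := by
    rw [hy2, hy3, cos_two_pi_div_five, cos_pi_div_five]; ring
  have hprod : x 2 * x 3 = √5 / 4 := by rw [hx2, hx3, sin_two_pi_div_five_mul_sin_pi_div_five]
  have hcross : x 3 * y 2 - x 2 * y 3 = x 2 := by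
    rw [hx2, hy2, hx3, hy3]
    linear_combination sin_pi_div_five_mul_cos_two_pi_div_five_add_sin_mul_cos
  rw [det_of_mirror_symmetric x y hx0 hy0 hx4 hy4, hdiff, hcross,
    sqrt_five_div_two_mul_five_sub_sqrt_five_eq, ← hx3]
  linear_combination 4 * √5 * hprod + sq_sqrt (by norm_num : (0 : ℝ) ≤ 5)
end

section
/- Let θ_n = 2π(n/5 + 1/20) for n ∈ {0,1,2,3,4}, and set x_n = sin(θ_n + 3π/10), y_n = cos θ_n. Then the determinant of the 4×4 matrix with rows (x_0, y_0, x_0 + y_0 − 1, 1), (x_1, y_1, −x_1 + y_1 + 1, 1), (x_4, y_4, x_4 − y_4 + 1, 1), (x_2, y_2, −x_2 − y_2 − 1, 1) equals (5/4)(√(2(√5 + 5)) − √5 − 1), which is strictly positive. -/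
/-!
All eight coordinates are `0` or `±c`, `±d` with `c = cos (π/10)` and `d = sin (π/5)`, and the
determinant factors as `2d (2c² + 4cd - 3c - d)`. Since `d = (√5 - 1) c / 2` and
`c² = (5 + √5) / 8`, this collapses to `5 (4c - 1 - √5) / 4`, while `√(2 (√5 + 5)) = 4c`.
Positivity is `cos (π/10) > cos (π/5) = (1 + √5) / 4`.
-/

open Real

namespace Real

theorem sin_pi_div_ten : sin (π / 10) = (√5 - 1) / 4 := by
  have hr : √5 ^ 2 = 5 := sq_sqrt (by norm_num)
  rw [← cos_pi_div_two_sub, show π / 2 - π / 10 = 2 * (π / 5) by ring, cos_two_mul,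
    cos_pi_div_five]
  linear_combination hr / 8

theorem cos_pi_div_ten_sq : cos (π / 10) ^ 2 = (√5 + 5) / 8 := by
  have h := cos_two_mul (π / 10)
  rw [show 2 * (π / 10) = π / 5 by ring, cos_pi_div_five] at h
  linear_combination -h / 2

theorem sin_pi_div_five_eq_mul_cos_pi_div_ten : sin (π / 5) = (√5 - 1) / 2 * cos (π / 10) := by
  rw [show π / 5 = 2 * (π / 10) by ring, sin_two_mul, sin_pi_div_ten]
  ring

theorem cos_pi_div_ten_pos : 0 < cos (π / 10) :=
  cos_pos_of_mem_Ioo ⟨by linarith [pi_pos], by linarith [pi_pos]⟩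

theorem sqrt_two_mul_sqrt_five_add_five : √(2 * (√5 + 5)) = 4 * cos (π / 10) := by
  rw [show 2 * (√5 + 5) = (4 * cos (π / 10)) ^ 2 by linear_combination -16 * cos_pi_div_ten_sq]
  exact sqrt_sq (by linarith [cos_pi_div_ten_pos])

theorem one_add_sqrt_five_div_four_lt_cos_pi_div_ten : (1 + √5) / 4 < cos (π / 10) := by
  rw [← cos_pi_div_five]
  exact cos_lt_cos_of_nonneg_of_le_pi (by positivity) (by linarith [pi_pos]) (by linarith [pi_pos])

end Real

theorem pentagon_x_coords {θ x : ℕ → ℝ} (hθ : ∀ n, θ n = 2 * π * ((n : ℝ) / 5 + 1 / 20))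
    (hx : ∀ n, x n = sin (θ n + 3 * π / 10)) :
    x 0 = cos (π / 10) ∧ x 1 = sin (π / 5) ∧ x 4 = 0 ∧ x 2 = -sin (π / 5) := by
  simp only [hx, hθ]
  push_cast
  refine ⟨?_, ?_, ?_, ?_⟩
  · rw [← sin_pi_div_two_sub]; congr 1; ring
  · rw [← sin_pi_sub]; congr 1; ring
  · rw [← sin_two_pi]; congr 1; ring
  · rw [← sin_add_pi]; congr 1; ring

theorem pentagon_y_coords {θ y : ℕ → ℝ} (hθ : ∀ n, θ n = 2 * π * ((n : ℝ) / 5 + 1 / 20))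
    (hy : ∀ n, y n = cos (θ n)) :
    y 0 = cos (π / 10) ∧ y 1 = 0 ∧ y 4 = sin (π / 5) ∧ y 2 = -cos (π / 10) := by
  simp only [hy, hθ]
  push_cast
  refine ⟨?_, ?_, ?_, ?_⟩
  · congr 1; ring
  · rw [← cos_pi_div_two]; congr 1; ring
  · rw [← cos_pi_div_two_sub, ← cos_neg, ← cos_add_two_pi]; congr 1; ring
  · rw [← cos_pi_sub]; congr 1; ring

theorem det_pentagon_matrix (c d : ℝ) :
    Matrix.det !![c, c, c + c - 1, 1;
                  d, 0, -d + 0 + 1, 1;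
                  0, d, 0 - d + 1, 1;
                  -d, -c, - -d - -c - 1, 1]
      = 2 * d * (2 * c ^ 2 + 4 * c * d - 3 * c - d) := by
  simp [Matrix.det_succ_row_zero, Fin.sum_univ_succ, Fin.succAbove]
  ring

theorem det_pentagon_matrix_at_cos_pi_div_ten :
    let c := cos (π / 10)
    let d := sin (π / 5)
    Matrix.det !![c, c, c + c - 1, 1;
                  d, 0, -d + 0 + 1, 1;
                  0, d, 0 - d + 1, 1;
                  -d, -c, - -d - -c - 1, 1]
      = 5 / 4 * (4 * c - √5 - 1) := by
  intro c d
  have hr : √5 ^ 2 = 5 := sq_sqrt (by norm_num)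
  have hd : d = (√5 - 1) / 2 * c := sin_pi_div_five_eq_mul_cos_pi_div_ten
  rw [det_pentagon_matrix, hd]
  linear_combination (2 * c ^ 3 - c ^ 2 / 2 - c / 4 - 1 / 4) * hr
    + ((10 - 2 * √5) * c - 2 * √5) * cos_pi_div_ten_sq

/-- The value `V_β` for the most difficult case `(a, γ, β, b) = (0, 1, 4, 2)` of the
pentagon construction, using the measurement at angle `3π/10` in place of Pauli X, equals
`(5/4)(√(2(√5 + 5)) − √5 − 1) > 0`. -/
theorem pentagon_Vbeta_difficult_case
    (θ x y : ℕ → ℝ)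
    (hθ : ∀ n, θ n = 2 * Real.pi * ((n : ℝ) / 5 + 1 / 20))
    (hx : ∀ n, x n = Real.sin (θ n + 3 * Real.pi / 10))
    (hy : ∀ n, y n = Real.cos (θ n)) :
    Matrix.det !![x 0, y 0, x 0 + y 0 - 1, 1;
                  x 1, y 1, -x 1 + y 1 + 1, 1;
                  x 4, y 4, x 4 - y 4 + 1, 1;
                  x 2, y 2, -x 2 - y 2 - 1, 1]
      = 5 / 4 * (Real.sqrt (2 * (Real.sqrt 5 + 5)) - Real.sqrt 5 - 1) ∧
    0 < 5 / 4 * (Real.sqrt (2 * (Real.sqrt 5 + 5)) - Real.sqrt 5 - 1) := by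
  obtain ⟨hx0, hx1, hx4, hx2⟩ := pentagon_x_coords hθ hx
  obtain ⟨hy0, hy1, hy4, hy2⟩ := pentagon_y_coords hθ hy
  rw [sqrt_two_mul_sqrt_five_add_five]
  refine ⟨?_, by linarith [one_add_sqrt_five_div_four_lt_cos_pi_div_ten]⟩
  rw [hx0, hx1, hx4, hx2, hy0, hy1, hy4, hy2, det_pentagon_matrix_at_cos_pi_div_ten]
end
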